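/- Suppose V0(X) ≥ λ0 almost surely for some constant λ0 > 0 (overlap). If a bounded measurable function θ of X satisfies the conditional moment equation E[(Y − q0(X) − θ(X)·(h0(Z,X) − p0(X)))·(h0(Z,X) − p0(X)) | X] = 0 almost surely, then θ(X) = θ0(X) almost surely; i.e., the heterogeneous effect function θ0 is identified by these moments. -/

import Mathlib

/-!
Conditioning on `(Z, X)` turns the IV condition into `E[Y | Z, X] = θ₀ h₀ + f₀`, and conditioning
further on `X` gives `q₀ = θ₀ p₀ + f₀`. Hence, with `D = h₀ - p₀`, the moment
`(Y - q₀ - θ D) D` has conditional mean `(θ₀ - θ) D²` given `(Z, X)`, and so `(θ₀ - θ) V₀` given `X`.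
The moment equation makes this vanish, and overlap (`V₀ > 0`) forces `θ = θ₀`.
-/

open MeasureTheory

section PartiallyLinearIV

variable {Ω : Type*} {m m' m₀ : MeasurableSpace Ω} {μ : Measure Ω}

theorem memLp_top_of_abs_le {f : Ω → ℝ} (hf : Measurable f) (hbdd : ∃ C, ∀ ω, |f ω| ≤ C) :
    MemLp f ⊤ μ :=
  let ⟨C, hC⟩ := hbdd
  memLp_top_of_bound hf.aestronglyMeasurable C (.of_forall hC)

variable [IsFiniteMeasure μ]

theorem condExp_mul_add_ae_eq (hm : m ≤ m₀) {a b T : Ω → ℝ} (ha : StronglyMeasurable[m] a)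
    (hb : StronglyMeasurable[m] b) (haT : Integrable (a * T) μ) (hT : Integrable T μ)
    (hbi : Integrable b μ) : μ[a * T + b | m] =ᵐ[μ] a * μ[T | m] + b :=
  (condExp_add haT hbi m).trans <|
    (condExp_mul_of_stronglyMeasurable_left ha haT hT).add
      (condExp_of_stronglyMeasurable hm hb hbi).eventuallyEq

theorem condExp_ae_eq_mul_add_of_condExp_sub_ae_eq_zero (hm : m ≤ m₀) {a b Y T : Ω → ℝ}
    (ha : StronglyMeasurable[m] a) (hb : StronglyMeasurable[m] b) (hY : Integrable Y μ)
    (haT : Integrable (a * T) μ) (hT : Integrable T μ) (hbi : Integrable b μ)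
    (h : μ[Y - a * T - b | m] =ᵐ[μ] 0) : μ[Y | m] =ᵐ[μ] a * μ[T | m] + b := by
  have hsub : μ[Y - (a * T + b) | m] =ᵐ[μ] μ[Y | m] - μ[a * T + b | m] :=
    condExp_sub hY (haT.add hbi) m
  rw [← sub_sub] at hsub
  filter_upwards [h, hsub, condExp_mul_add_ae_eq hm ha hb haT hT hbi] with ω h₀ hsub hlin
  simp only [Pi.sub_apply, Pi.zero_apply] at h₀ hsub
  rw [← hlin]
  linarith

theorem condExp_ae_eq_zero_of_le (hmm' : m ≤ m') (hm' : m' ≤ m₀) {f : Ω → ℝ}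
    (h : μ[f | m'] =ᵐ[μ] 0) : μ[f | m] =ᵐ[μ] 0 :=
  (condExp_condExp_of_le hmm' hm').symm.trans <| (condExp_congr_ae h).trans <| by simp

theorem condExp_moment_ae_eq (hmm' : m ≤ m') (hm' : m' ≤ m₀)
    {Y T θ₀ f₀ q₀ p₀ h θ : Ω → ℝ} (hY : MemLp Y ⊤ μ) (hT : MemLp T ⊤ μ)
    (hθ₀ : MemLp θ₀ ⊤ μ) (hf₀ : MemLp f₀ ⊤ μ) (hq₀ : MemLp q₀ ⊤ μ) (hp₀ : MemLp p₀ ⊤ μ)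
    (hh : MemLp h ⊤ μ) (hθ : MemLp θ ⊤ μ)
    (hθ₀m : StronglyMeasurable[m] θ₀) (hf₀m : StronglyMeasurable[m] f₀)
    (hq₀m : StronglyMeasurable[m] q₀) (hp₀m : StronglyMeasurable[m] p₀)
    (hθm : StronglyMeasurable[m] θ) (hhm : StronglyMeasurable[m'] h)
    (hIV : μ[Y - θ₀ * T - f₀ | m'] =ᵐ[μ] 0) (hq₀Y : q₀ =ᵐ[μ] μ[Y | m])
    (hp₀T : p₀ =ᵐ[μ] μ[T | m]) (hhT : h =ᵐ[μ] μ[T | m']) :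
    μ[(Y - q₀ - θ * (h - p₀)) * (h - p₀) | m] =ᵐ[μ] (θ₀ - θ) * μ[(h - p₀) ^ 2 | m] := by
  have hm : m ≤ m₀ := hmm'.trans hm'
  have integrable : ∀ {f : Ω → ℝ}, MemLp f ⊤ μ → Integrable f μ := fun hf => hf.integrable le_top
  have hD : MemLp (h - p₀) ⊤ μ := hh.sub hp₀
  have hD2 : MemLp ((h - p₀) ^ 2) ⊤ μ := by
    rw [sq]
    exact hD.mul hD
  have hDm : StronglyMeasurable[m'] (h - p₀) := hhm.sub (hp₀m.mono hmm')
  have hYm' : μ[Y | m'] =ᵐ[μ] θ₀ * h + f₀ :=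
    (condExp_ae_eq_mul_add_of_condExp_sub_ae_eq_zero hm' (hθ₀m.mono hmm') (hf₀m.mono hmm')
      (integrable hY) (integrable (hT.mul hθ₀)) (integrable hT) (integrable hf₀) hIV).trans
      ((Filter.EventuallyEq.rfl.mul hhT.symm).add .rfl)
  have hq₀_eq : q₀ =ᵐ[μ] θ₀ * p₀ + f₀ :=
    hq₀Y.trans <| (condExp_ae_eq_mul_add_of_condExp_sub_ae_eq_zero hm hθ₀m hf₀m (integrable hY)
      (integrable (hT.mul hθ₀)) (integrable hT) (integrable hf₀) (condExp_ae_eq_zero_of_le hmm' hm' hIV)).trans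
      ((Filter.EventuallyEq.rfl.mul hp₀T.symm).add .rfl)
  -- Both `h - p₀` and the second summand are `m'`-measurable, so they pull out of `μ[· | m']`.
  have hsplit : (Y - q₀ - θ * (h - p₀)) * (h - p₀) =
      (h - p₀) * Y + -((q₀ + θ * (h - p₀)) * (h - p₀)) := by
    ext ω
    simp only [Pi.add_apply, Pi.sub_apply, Pi.mul_apply, Pi.neg_apply]
    ring
  have hmom' : μ[(Y - q₀ - θ * (h - p₀)) * (h - p₀) | m'] =ᵐ[μ] (θ₀ - θ) * (h - p₀) ^ 2 := by
    rw [hsplit]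
    filter_upwards [condExp_mul_add_ae_eq hm' hDm
      (((hq₀m.mono hmm').add ((hθm.mono hmm').mul hDm)).mul hDm).neg
      (integrable (hY.mul hD)) (integrable hY) (integrable (hD.mul (hq₀.add (hD.mul hθ))).neg),
      hYm', hq₀_eq] with ω hlin hY' hq₀'
    simp only [Pi.add_apply, Pi.sub_apply, Pi.mul_apply, Pi.neg_apply, Pi.pow_apply] at *
    rw [hlin, hY', hq₀']
    ring
  calc μ[(Y - q₀ - θ * (h - p₀)) * (h - p₀) | m]
      =ᵐ[μ] μ[μ[(Y - q₀ - θ * (h - p₀)) * (h - p₀) | m'] | m] :=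
        (condExp_condExp_of_le hmm' hm').symm
    _ =ᵐ[μ] μ[(θ₀ - θ) * (h - p₀) ^ 2 | m] := condExp_congr_ae hmom'
    _ =ᵐ[μ] (θ₀ - θ) * μ[(h - p₀) ^ 2 | m] :=
        condExp_mul_of_stronglyMeasurable_left (hθ₀m.sub hθm)
          (integrable (hD2.mul (hθ₀.sub hθ))) (integrable hD2)

end PartiallyLinearIV

theorem stmt_3_general
    {Ω 𝓧 : Type*} [MeasurableSpace Ω] [MeasurableSpace 𝓧]
    (μ : Measure Ω) [IsProbabilityMeasure μ]
    (Y T Z : Ω → ℝ) (X : Ω → 𝓧)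
    (hY : Measurable Y) (hT : Measurable T) (hZ : Measurable Z) (hX : Measurable X)
    (hYbdd : ∃ C, ∀ ω, |Y ω| ≤ C) (hTbdd : ∃ C, ∀ ω, |T ω| ≤ C)
    (θ0 f0 : 𝓧 → ℝ) (hθ0m : Measurable θ0) (hf0m : Measurable f0)
    (hθ0bdd : ∃ C, ∀ x, |θ0 x| ≤ C) (hf0bdd : ∃ C, ∀ x, |f0 x| ≤ C)
    (hIV : μ[fun ω => Y ω - θ0 (X ω) * T ω - f0 (X ω) |
        MeasurableSpace.comap (fun ω => (Z ω, X ω)) inferInstance] =ᵐ[μ] 0)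
    (q0 p0 : 𝓧 → ℝ) (hq0m : Measurable q0) (hp0m : Measurable p0)
    (hq0bdd : ∃ C, ∀ x, |q0 x| ≤ C) (hp0bdd : ∃ C, ∀ x, |p0 x| ≤ C)
    (hq0 : (fun ω => q0 (X ω)) =ᵐ[μ] μ[Y | MeasurableSpace.comap X inferInstance])
    (hp0 : (fun ω => p0 (X ω)) =ᵐ[μ] μ[T | MeasurableSpace.comap X inferInstance])
    (h0 : ℝ × 𝓧 → ℝ) (hh0m : Measurable h0) (hh0bdd : ∃ C, ∀ zx, |h0 zx| ≤ C)
    (hh0 : (fun ω => h0 (Z ω, X ω)) =ᵐ[μ]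
        μ[T | MeasurableSpace.comap (fun ω => (Z ω, X ω)) inferInstance])
    (V0 : 𝓧 → ℝ)
    (hV0 : (fun ω => V0 (X ω)) =ᵐ[μ]
        μ[fun ω => (h0 (Z ω, X ω) - p0 (X ω)) ^ 2 | MeasurableSpace.comap X inferInstance])
    (lam0 : ℝ) (hlam0 : 0 < lam0) (hoverlap : ∀ᵐ ω ∂μ, lam0 ≤ V0 (X ω))
    (θ : 𝓧 → ℝ) (hθm : Measurable θ) (hθbdd : ∃ C, ∀ x, |θ x| ≤ C)
    (hmom : μ[fun ω => (Y ω - q0 (X ω) - θ (X ω) * (h0 (Z ω, X ω) - p0 (X ω)))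
        * (h0 (Z ω, X ω) - p0 (X ω)) | MeasurableSpace.comap X inferInstance] =ᵐ[μ] 0) :
    (fun ω => θ (X ω)) =ᵐ[μ] (fun ω => θ0 (X ω)) := by
  have hW : Measurable fun ω => (Z ω, X ω) := hZ.prodMk hX
  have hXF : Measurable[MeasurableSpace.comap X inferInstance] X := comap_measurable X
  have hFG : MeasurableSpace.comap X inferInstance ≤
      MeasurableSpace.comap (fun ω => (Z ω, X ω)) inferInstance :=
    (measurable_snd.comp (comap_measurable fun ω => (Z ω, X ω))).comap_le
  have key := condExp_moment_ae_eq (μ := μ) hFG hW.comap_le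
    (memLp_top_of_abs_le hY hYbdd) (memLp_top_of_abs_le hT hTbdd)
    (memLp_top_of_abs_le (hθ0m.comp hX) (hθ0bdd.imp fun _ hC ω => hC (X ω)))
    (memLp_top_of_abs_le (hf0m.comp hX) (hf0bdd.imp fun _ hC ω => hC (X ω)))
    (memLp_top_of_abs_le (hq0m.comp hX) (hq0bdd.imp fun _ hC ω => hC (X ω)))
    (memLp_top_of_abs_le (hp0m.comp hX) (hp0bdd.imp fun _ hC ω => hC (X ω)))
    (memLp_top_of_abs_le (hh0m.comp hW) (hh0bdd.imp fun _ hC ω => hC (Z ω, X ω)))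
    (memLp_top_of_abs_le (hθm.comp hX) (hθbdd.imp fun _ hC ω => hC (X ω)))
    (hθ0m.comp hXF).stronglyMeasurable (hf0m.comp hXF).stronglyMeasurable
    (hq0m.comp hXF).stronglyMeasurable (hp0m.comp hXF).stronglyMeasurable
    (hθm.comp hXF).stronglyMeasurable
    (hh0m.comp (comap_measurable fun ω => (Z ω, X ω))).stronglyMeasurable
    hIV hq0 hp0 hh0
  have hprod : ∀ᵐ ω ∂μ, (θ0 (X ω) - θ (X ω)) * V0 (X ω) = 0 := by
    filter_upwards [hmom.symm.trans key, hV0] with ω hzero hV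
    rw [hV]
    exact hzero.symm
  filter_upwards [hprod, hoverlap] with ω hprod hlam
  exact (sub_eq_zero.mp ((mul_eq_zero.mp hprod).resolve_right (by linarith))).symm

theorem stmt_3
    {Ω 𝓧 : Type*} [MeasurableSpace Ω] [MeasurableSpace 𝓧] [StandardBorelSpace 𝓧]
    (μ : Measure Ω) [IsProbabilityMeasure μ]
    (Y T Z : Ω → ℝ) (X : Ω → 𝓧)
    (hY : Measurable Y) (hT : Measurable T) (hZ : Measurable Z) (hX : Measurable X)
    (hYbdd : ∃ C, ∀ ω, |Y ω| ≤ C) (hTbdd : ∃ C, ∀ ω, |T ω| ≤ C)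
    (hZbdd : ∃ C, ∀ ω, |Z ω| ≤ C)
    (θ0 f0 : 𝓧 → ℝ) (hθ0m : Measurable θ0) (hf0m : Measurable f0)
    (hθ0bdd : ∃ C, ∀ x, |θ0 x| ≤ C) (hf0bdd : ∃ C, ∀ x, |f0 x| ≤ C)
    (hIV : μ[fun ω => Y ω - θ0 (X ω) * T ω - f0 (X ω) |
        MeasurableSpace.comap (fun ω => (Z ω, X ω)) inferInstance] =ᵐ[μ] 0)
    (q0 p0 r0 : 𝓧 → ℝ) (hq0m : Measurable q0) (hp0m : Measurable p0) (hr0m : Measurable r0)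
    (hq0bdd : ∃ C, ∀ x, |q0 x| ≤ C) (hp0bdd : ∃ C, ∀ x, |p0 x| ≤ C)
    (hr0bdd : ∃ C, ∀ x, |r0 x| ≤ C)
    (hq0 : (fun ω => q0 (X ω)) =ᵐ[μ] μ[Y | MeasurableSpace.comap X inferInstance])
    (hp0 : (fun ω => p0 (X ω)) =ᵐ[μ] μ[T | MeasurableSpace.comap X inferInstance])
    (hr0 : (fun ω => r0 (X ω)) =ᵐ[μ] μ[Z | MeasurableSpace.comap X inferInstance])
    (h0 : ℝ × 𝓧 → ℝ) (hh0m : Measurable h0) (hh0bdd : ∃ C, ∀ zx, |h0 zx| ≤ C)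
    (hh0 : (fun ω => h0 (Z ω, X ω)) =ᵐ[μ]
        μ[T | MeasurableSpace.comap (fun ω => (Z ω, X ω)) inferInstance])
    (β0 : 𝓧 → ℝ) (hβ0m : Measurable β0) (hβ0bdd : ∃ C, ∀ x, |β0 x| ≤ C)
    (hβ0 : (fun ω => β0 (X ω)) =ᵐ[μ]
        μ[fun ω => (T ω - p0 (X ω)) * (Z ω - r0 (X ω)) | MeasurableSpace.comap X inferInstance])
    (V0 : 𝓧 → ℝ) (hV0m : Measurable V0) (hV0bdd : ∃ C, ∀ x, |V0 x| ≤ C)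
    (hV0 : (fun ω => V0 (X ω)) =ᵐ[μ]
        μ[fun ω => (h0 (Z ω, X ω) - p0 (X ω)) ^ 2 | MeasurableSpace.comap X inferInstance])
    (lam0 : ℝ) (hlam0 : 0 < lam0) (hoverlap : ∀ᵐ ω ∂μ, lam0 ≤ V0 (X ω))
    (θ : 𝓧 → ℝ) (hθm : Measurable θ) (hθbdd : ∃ C, ∀ x, |θ x| ≤ C)
    (hmom : μ[fun ω => (Y ω - q0 (X ω) - θ (X ω) * (h0 (Z ω, X ω) - p0 (X ω)))
        * (h0 (Z ω, X ω) - p0 (X ω)) | MeasurableSpace.comap X inferInstance] =ᵐ[μ] 0) :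
    (fun ω => θ (X ω)) =ᵐ[μ] (fun ω => θ0 (X ω)) :=
  stmt_3_general μ Y T Z X hY hT hZ hX hYbdd hTbdd θ0 f0 hθ0m hf0m hθ0bdd hf0bdd hIV q0 p0 hq0m hp0m
    hq0bdd hp0bdd hq0 hp0 h0 hh0m hh0bdd hh0 V0 hV0 lam0 hlam0 hoverlap θ hθm hθbdd hmom
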